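/- Let ι be a finite nonempty type, H a countable type, and π a probability mass function on ι × H with marginal π_M(m) = Σ_h π(m,h) > 0 for every m and conditionals π(h|m) = π(m,h)/π_M(m). For each m ∈ ι let 𝒬_m be a nonempty set of pmfs on H. Then the infimum, over all pmfs Q_M on ι and all choices Q_{H|m} ∈ 𝒬_m (m ∈ ι), of KL(Q_M ⊗ Q_{H|·}‖π) (where (Q_M ⊗ Q_{H|·})(m,h) = Q_M(m)·Q_{H|m}(h)) equals the infimum over pmfs Q_M of [KL(Q_M‖π_M) + Σ_{m∈ι} Q_M(m)·inf_{Q_{H|m} ∈ 𝒬_m} KL(Q_{H|m}‖π(·|m))], as an identity in [0,∞]. Moreover, if for each m the infimum inf_{Q ∈ 𝒬_m} KL(Q‖π(·|m)) is attained at some Q^{VB}_{H|m} with finite value, then the weights ᾱ^{VB}_m ∝ π_M(m)·exp(−KL(Q^{VB}_{H|m}‖π(·|m))) together with the distributions Q^{VB}_{H|m} attain the overall infimum. -/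

import Mathlib

open scoped ENNReal Classical

/-- Kullback–Leibler divergence between two probability mass functions on a countable
type: `KL(p‖q) = ∑ x, p x * log (p x / q x) ∈ [0,∞]`, with the conventions
`0 * log (0 / q x) = 0` (automatic since the factor `p x` vanishes) and
`KL(p‖q) = ∞` when `p` is not absolutely continuous with respect to `q`
(or when the series fails to be summable, in which case the sum is genuinely `+∞`
since the negative parts of a relative-entropy series are always summable). -/
noncomputable def klDiv {X : Type*} (p q : PMF X) : ℝ≥0∞ :=
  if (∀ x, q x = 0 → p x = 0) ∧
      Summable (fun x => (p x).toReal * Real.log ((p x).toReal / (q x).toReal))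
  then ENNReal.ofReal (∑' x, (p x).toReal * Real.log ((p x).toReal / (q x).toReal))
  else ⊤

/-- The joint pmf on `ι × H` obtained from a pmf `QM` on `ι` and a family of conditionals
`QH m` on `H`; its value at `(m, h)` is `QM m * QH m h`. -/
noncomputable def jointPMF {ι H : Type*} (QM : PMF ι) (QH : ι → PMF H) : PMF (ι × H) :=
  QM.bind fun m => (QH m).map fun h => (m, h)

/-!
By the chain rule
`KL(QM ⊗ QH‖πM ⊗ cond) = KL(QM‖πM) + ∑ m, QM m * KL(QH m‖cond m)`,
the minimisation over the conditionals decouples into one problem per `m`, solved by `QVB m`.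
What remains is the Gibbs objective `q ↦ KL(q‖πM) + ∑ m, q m * c m` with
`c m = KL(QVB m‖cond m)`, which equals `KL(q‖αVB) - log Z` for the normalising constant `Z`
of `πM * exp (-c)` and is therefore minimised at `q = αVB`.
-/

noncomputable def klTerm {X : Type*} (p q : PMF X) (x : X) : ℝ :=
  (p x).toReal * Real.log ((p x).toReal / (q x).toReal)

theorem PMF.hasSum_toReal {X : Type*} (p : PMF X) : HasSum (fun x => (p x).toReal) 1 := by
  have h := ENNReal.hasSum_toReal (p.tsum_coe ▸ ENNReal.one_ne_top)
  rwa [← ENNReal.tsum_toReal_eq p.apply_ne_top, p.tsum_coe, ENNReal.toReal_one] at h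

theorem PMF.sum_toReal {X : Type*} [Fintype X] (p : PMF X) : ∑ x, (p x).toReal = 1 :=
  (hasSum_fintype _).unique p.hasSum_toReal

section KL

variable {X : Type*} {p q : PMF X}

theorem klDiv_eq_ofReal_tsum (hac : ∀ x, q x = 0 → p x = 0) (hs : Summable (klTerm p q)) :
    klDiv p q = ENNReal.ofReal (∑' x, klTerm p q x) :=
  if_pos (α := ℝ≥0∞) ⟨hac, hs⟩

theorem klDiv_ne_top_iff :
    klDiv p q ≠ ⊤ ↔ (∀ x, q x = 0 → p x = 0) ∧ Summable (klTerm p q) := by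
  unfold klDiv klTerm
  split_ifs with h
  · exact iff_of_true ENNReal.ofReal_ne_top h
  · exact iff_of_false (· rfl) h

theorem sub_toReal_le_klTerm (x : X) (hac : q x = 0 → p x = 0) :
    (p x).toReal - (q x).toReal ≤ klTerm p q x := by
  by_cases hq : q x = 0
  · simp [klTerm, hq, hac hq]
  have hb : 0 < (q x).toReal := ENNReal.toReal_pos hq (q.apply_ne_top x)
  have := mul_nonneg hb.le (InformationTheory.klFun_nonneg (div_nonneg (p x).toReal_nonneg hb.le))
  -- `b * klFun (a / b) = a * log (a / b) + b - a`
  rw [InformationTheory.klFun_apply] at this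
  rw [klTerm]
  field_simp at this
  linarith

theorem tsum_klTerm_nonneg (hac : ∀ x, q x = 0 → p x = 0) (hs : Summable (klTerm p q)) :
    0 ≤ ∑' x, klTerm p q x := by
  simpa using hasSum_le (fun x => sub_toReal_le_klTerm x (hac x))
    (p.hasSum_toReal.sub q.hasSum_toReal) hs.hasSum

theorem toReal_klDiv (hac : ∀ x, q x = 0 → p x = 0) (hs : Summable (klTerm p q)) :
    (klDiv p q).toReal = ∑' x, klTerm p q x := by
  rw [klDiv_eq_ofReal_tsum hac hs, ENNReal.toReal_ofReal (tsum_klTerm_nonneg hac hs)]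

theorem klDiv_self (p : PMF X) : klDiv p p = 0 := by
  have hzero : klTerm p p = 0 := by
    funext x
    by_cases hp : p x = 0
    · simp [klTerm, hp]
    · simp [klTerm, div_self (ENNReal.toReal_ne_zero.2 ⟨hp, p.apply_ne_top x⟩)]
  rw [klDiv_eq_ofReal_tsum (fun _ h => h) (hzero ▸ summable_zero), hzero]
  simp

theorem klDiv_eq_ofReal_sum [Fintype X] (hq : ∀ x, q x ≠ 0) :
    klDiv p q = ENNReal.ofReal (∑ x, klTerm p q x) := by
  rw [klDiv_eq_ofReal_tsum (fun x h => absurd h (hq x)) .of_finite, tsum_fintype]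

theorem sum_klTerm_nonneg [Fintype X] (hq : ∀ x, q x ≠ 0) : 0 ≤ ∑ x, klTerm p q x := by
  simpa using tsum_klTerm_nonneg (fun x h => absurd h (hq x)) (Summable.of_finite (f := klTerm p q))

end KL

theorem hasSum_prod_of_fintype {ι H α : Type*} [Fintype ι] [AddCommMonoid α]
    [TopologicalSpace α] [ContinuousAdd α] {f : ι × H → α} {g : ι → α}
    (hf : ∀ m, HasSum (fun h => f (m, h)) (g m)) : HasSum f (∑ m, g m) := by
  have hfibres := hasSum_sum fun m (_ : m ∈ Finset.univ) =>
    (hasSum_extend_zero (Prod.mk_right_injective m)).2 (hf m)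
  convert hfibres with x
  obtain ⟨m, h⟩ := x
  rw [Finset.sum_eq_single_of_mem m (Finset.mem_univ m) fun m' _ hm' => ?_,
    (Prod.mk_right_injective m).extend_apply]
  refine Function.extend_apply' _ _ _ ?_
  rintro ⟨h', hh'⟩
  exact hm' (Prod.ext_iff.1 hh').1

section Joint

variable {ι H : Type*} (QM πM : PMF ι) (QH cond : ι → PMF H)

theorem jointPMF_apply (m : ι) (h : H) : jointPMF QM QH (m, h) = QM m * QH m h := by
  simp only [jointPMF, PMF.bind_apply, PMF.map_apply, Prod.ext_iff]
  rw [tsum_eq_single m fun m' hm' => by simp [Ne.symm hm'],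
    tsum_eq_single h fun h' hh' => by simp [Ne.symm hh']]
  simp

theorem klTerm_jointPMF {m : ι} {h : H} (hπM : πM m ≠ 0) (hac : cond m h = 0 → QH m h = 0) :
    klTerm (jointPMF QM QH) (jointPMF πM cond) (m, h) =
      klTerm QM πM m * (QH m h).toReal + (QM m).toReal * klTerm (QH m) (cond m) h := by
  simp only [klTerm, jointPMF_apply, ENNReal.toReal_mul]
  by_cases hQ : QM m = 0 ∨ QH m h = 0
  · rcases hQ with hQ | hQ <;> simp [hQ]
  push Not at hQ
  have hc : (πM m).toReal ≠ 0 := ENNReal.toReal_ne_zero.2 ⟨hπM, πM.apply_ne_top m⟩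
  have hd : (cond m h).toReal ≠ 0 :=
    ENNReal.toReal_ne_zero.2 ⟨mt hac hQ.2, (cond m).apply_ne_top h⟩
  have ha : (QM m).toReal ≠ 0 := ENNReal.toReal_ne_zero.2 ⟨hQ.1, QM.apply_ne_top m⟩
  have hb : (QH m h).toReal ≠ 0 := ENNReal.toReal_ne_zero.2 ⟨hQ.2, (QH m).apply_ne_top h⟩
  rw [← div_mul_div_comm, Real.log_mul (div_ne_zero ha hc) (div_ne_zero hb hd)]
  ring

theorem hasSum_klTerm_jointPMF_fibre {m : ι} (hπM : πM m ≠ 0)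
    (hfin : QM m ≠ 0 → klDiv (QH m) (cond m) ≠ ⊤) :
    HasSum (fun h => klTerm (jointPMF QM QH) (jointPMF πM cond) (m, h))
      (klTerm QM πM m + (QM m).toReal * (klDiv (QH m) (cond m)).toReal) := by
  by_cases hQ : QM m = 0
  · simp [klTerm, jointPMF_apply, hQ]
  obtain ⟨hac, hs⟩ := klDiv_ne_top_iff.1 (hfin hQ)
  simp_rw [klTerm_jointPMF QM πM QH cond hπM (hac _), toReal_klDiv hac hs]
  simpa using ((QH m).hasSum_toReal.mul_left _).add (hs.hasSum.mul_left (QM m).toReal)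

theorem klDiv_jointPMF_eq_top (hπM : ∀ m, πM m ≠ 0) {m : ι} (hQ : QM m ≠ 0)
    (htop : klDiv (QH m) (cond m) = ⊤) :
    klDiv (jointPMF QM QH) (jointPMF πM cond) = ⊤ := by
  by_contra hne
  obtain ⟨hac, hs⟩ := klDiv_ne_top_iff.1 hne
  have hac_m : ∀ h, cond m h = 0 → QH m h = 0 := fun h hc => by
    simpa [jointPMF_apply, hQ] using hac (m, h) (by simp [jointPMF_apply, hc])
  have hs_m := hs.comp_injective (Prod.mk_right_injective m)
  simp only [Function.comp_def, klTerm_jointPMF QM πM QH cond (hπM m) (hac_m _)] at hs_m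
  have hs_mul := hs_m.sub ((QH m).hasSum_toReal.summable.mul_left (klTerm QM πM m))
  simp only [add_sub_cancel_left] at hs_mul
  have hQ_real : (QM m).toReal ≠ 0 := ENNReal.toReal_ne_zero.2 ⟨hQ, QM.apply_ne_top m⟩
  exact klDiv_ne_top_iff.2 ⟨hac_m, (summable_mul_left_iff hQ_real).1 hs_mul⟩ htop

variable [Fintype ι]

theorem klDiv_jointPMF_of_ne_top (hπM : ∀ m, πM m ≠ 0)
    (hfin : ∀ m, QM m ≠ 0 → klDiv (QH m) (cond m) ≠ ⊤) :
    klDiv (jointPMF QM QH) (jointPMF πM cond) =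
      klDiv QM πM + ∑ m, QM m * klDiv (QH m) (cond m) := by
  have hsum := hasSum_prod_of_fintype fun m =>
    hasSum_klTerm_jointPMF_fibre QM πM QH cond (hπM m) (hfin m)
  have hac : ∀ x, jointPMF πM cond x = 0 → jointPMF QM QH x = 0 := by
    rintro ⟨m, h⟩ hx
    rw [jointPMF_apply] at hx ⊢
    by_cases hQ : QM m = 0
    · simp [hQ]
    · rw [(klDiv_ne_top_iff.1 (hfin m hQ)).1 h ((mul_eq_zero.1 hx).resolve_left (hπM m)),
        mul_zero]
  have hterm_nonneg : ∀ m ∈ Finset.univ, 0 ≤ (QM m).toReal * (klDiv (QH m) (cond m)).toReal :=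
    fun _ _ => mul_nonneg ENNReal.toReal_nonneg ENNReal.toReal_nonneg
  have hmul : ∀ m, ENNReal.ofReal ((QM m).toReal * (klDiv (QH m) (cond m)).toReal) =
      QM m * klDiv (QH m) (cond m) := fun m => by
    rw [← ENNReal.toReal_mul, ENNReal.ofReal_toReal]
    by_cases hQ : QM m = 0
    · simp [hQ]
    · exact ENNReal.mul_ne_top (QM.apply_ne_top m) (hfin m hQ)
  rw [klDiv_eq_ofReal_tsum hac hsum.summable, hsum.tsum_eq, klDiv_eq_ofReal_sum hπM,
    Finset.sum_add_distrib,
    ENNReal.ofReal_add (sum_klTerm_nonneg hπM) (Finset.sum_nonneg hterm_nonneg),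
    ENNReal.ofReal_sum_of_nonneg hterm_nonneg]
  simp only [hmul]

theorem klDiv_jointPMF (hπM : ∀ m, πM m ≠ 0) :
    klDiv (jointPMF QM QH) (jointPMF πM cond) =
      klDiv QM πM + ∑ m, QM m * klDiv (QH m) (cond m) := by
  by_cases hfin : ∀ m, QM m ≠ 0 → klDiv (QH m) (cond m) ≠ ⊤
  · exact klDiv_jointPMF_of_ne_top QM πM QH cond hπM hfin
  push Not at hfin
  obtain ⟨m, hQ, htop⟩ := hfin
  rw [klDiv_jointPMF_eq_top QM πM QH cond hπM hQ htop, eq_comm, ENNReal.add_eq_top,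
    ENNReal.sum_eq_top]
  exact Or.inr ⟨m, Finset.mem_univ m, by simp [htop, hQ]⟩

end Joint

theorem klDiv_add_sum_mul_eq {ι : Type*} [Fintype ι] (q p α : PMF ι) (c : ι → ℝ≥0∞)
    (hp : ∀ m, p m ≠ 0) (hc : ∀ m, c m ≠ ⊤)
    (hα : ∀ m, α m = ENNReal.ofReal
      ((p m).toReal * Real.exp (-(c m).toReal) /
        ∑ j, (p j).toReal * Real.exp (-(c j).toReal))) :
    klDiv q p + ∑ m, q m * c m =
      klDiv q α + ENNReal.ofReal
        (-Real.log (∑ j, (p j).toReal * Real.exp (-(c j).toReal))) := by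
  set w : ι → ℝ := fun m => (p m).toReal * Real.exp (-(c m).toReal) with hw
  set Z := ∑ j, w j
  have hw_pos : ∀ m, 0 < w m := fun m =>
    mul_pos (ENNReal.toReal_pos (hp m) (p.apply_ne_top m)) (Real.exp_pos _)
  have hZ_pos : ∀ m, 0 < Z := fun m =>
    (hw_pos m).trans_le (Finset.single_le_sum (fun j _ => (hw_pos j).le) (Finset.mem_univ m))
  have hZ_le_one : Z ≤ 1 := by
    rw [← p.sum_toReal]
    refine Finset.sum_le_sum fun m _ => mul_le_of_le_one_right ENNReal.toReal_nonneg ?_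
    exact Real.exp_le_one_iff.2 (neg_nonpos.2 ENNReal.toReal_nonneg)
  have hα_toReal : ∀ m, (α m).toReal = w m / Z := fun m => by
    rw [hα, ENNReal.toReal_ofReal (div_pos (hw_pos m) (hZ_pos m)).le]
  have hα_ne : ∀ m, α m ≠ 0 := fun m h => by
    have := hα_toReal m
    rw [h, ENNReal.toReal_zero] at this
    exact (div_pos (hw_pos m) (hZ_pos m)).ne this
  have hterm : ∀ m, klTerm q p m + (q m).toReal * (c m).toReal =
      klTerm q α m + (q m).toReal * -Real.log Z := fun m => by
    by_cases hq : q m = 0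
    · simp [klTerm, hq]
    have hq_pos : 0 < (q m).toReal := ENNReal.toReal_pos hq (q.apply_ne_top m)
    have hp_pos : 0 < (p m).toReal := ENNReal.toReal_pos (hp m) (p.apply_ne_top m)
    rw [klTerm, klTerm, hα_toReal, Real.log_div hq_pos.ne' hp_pos.ne',
      Real.log_div hq_pos.ne' (div_pos (hw_pos m) (hZ_pos m)).ne',
      Real.log_div (hw_pos m).ne' (hZ_pos m).ne', hw, Real.log_mul hp_pos.ne' (Real.exp_pos _).ne',
      Real.log_exp]
    ring
  have hsum_mul : ∑ m, q m * c m = ENNReal.ofReal (∑ m, (q m).toReal * (c m).toReal) := by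
    rw [ENNReal.ofReal_sum_of_nonneg fun m _ => by positivity]
    refine Finset.sum_congr rfl fun m _ => ?_
    rw [ENNReal.ofReal_mul ENNReal.toReal_nonneg, ENNReal.ofReal_toReal (q.apply_ne_top m),
      ENNReal.ofReal_toReal (hc m)]
  rw [klDiv_eq_ofReal_sum hp, klDiv_eq_ofReal_sum hα_ne, hsum_mul,
    ← ENNReal.ofReal_add (sum_klTerm_nonneg hp) (by positivity),
    ← ENNReal.ofReal_add (sum_klTerm_nonneg hα_ne) (neg_nonneg.2 (Real.log_nonpos
      (Finset.sum_nonneg fun j _ => (hw_pos j).le) hZ_le_one)),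
    ← Finset.sum_add_distrib, Finset.sum_congr rfl fun m _ => hterm m, Finset.sum_add_distrib,
    ← Finset.sum_mul, q.sum_toReal, one_mul]

theorem iInf_klDiv_jointPMF {ι H : Type*} [Fintype ι] (QM πM : PMF ι) (cond : ι → PMF H)
    (hπM : ∀ m, πM m ≠ 0) (𝒬 : ι → Set (PMF H)) (QVB : ι → PMF H)
    (hQVB_mem : ∀ m, QVB m ∈ 𝒬 m)
    (hQVB_att : ∀ m, klDiv (QVB m) (cond m) = ⨅ Q ∈ 𝒬 m, klDiv Q (cond m)) :
    ⨅ QH : (m : ι) → 𝒬 m, klDiv (jointPMF QM fun m => (QH m : PMF H)) (jointPMF πM cond) =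
      klDiv QM πM + ∑ m, QM m * ⨅ Q ∈ 𝒬 m, klDiv Q (cond m) := by
  simp only [klDiv_jointPMF _ _ _ _ hπM, ← hQVB_att]
  refine le_antisymm (iInf_le_of_le (fun m => ⟨QVB m, hQVB_mem m⟩) le_rfl)
    (le_iInf fun QH => ?_)
  gcongr with m
  exact hQVB_att m ▸ iInf₂_le _ (QH m).2

theorem variational_two_step_optimisation_general {ι H : Type*} [Fintype ι]
    (π : PMF (ι × H))
    (πM : PMF ι)
    (hπM_pos : ∀ m, 0 < πM m)
    (cond : ι → PMF H) (hcond : ∀ m h, cond m h = π (m, h) / πM m)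
    (𝒬 : ι → Set (PMF H))
    (QVB : ι → PMF H) (hQVB_mem : ∀ m, QVB m ∈ 𝒬 m)
    (hQVB_att : ∀ m, klDiv (QVB m) (cond m) = ⨅ Q ∈ 𝒬 m, klDiv Q (cond m))
    (hQVB_fin : ∀ m, klDiv (QVB m) (cond m) < ⊤)
    (αVB : PMF ι)
    (hαVB : ∀ m, αVB m = ENNReal.ofReal
      ((πM m).toReal * Real.exp (- (klDiv (QVB m) (cond m)).toReal) /
        ∑ j, (πM j).toReal * Real.exp (- (klDiv (QVB j) (cond j)).toReal))) :
    ((⨅ (QM : PMF ι) (QH : (m : ι) → 𝒬 m),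
        klDiv (jointPMF QM fun m => (QH m : PMF H)) π) =
      ⨅ QM : PMF ι,
        (klDiv QM πM + ∑ m, QM m * ⨅ Q ∈ 𝒬 m, klDiv Q (cond m))) ∧
    klDiv (jointPMF αVB QVB) π =
      ⨅ (QM : PMF ι) (QH : (m : ι) → 𝒬 m),
        klDiv (jointPMF QM fun m => (QH m : PMF H)) π := by
  have hπM : ∀ m, πM m ≠ 0 := fun m => (hπM_pos m).ne'
  have hπ : π = jointPMF πM cond := PMF.ext fun ⟨m, h⟩ => by
    rw [jointPMF_apply, hcond, ENNReal.mul_div_cancel (hπM m) (πM.apply_ne_top m)]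
  have hinner := fun QM => iInf_klDiv_jointPMF QM πM cond hπM 𝒬 QVB hQVB_mem hQVB_att
  have hgibbs := fun QM => klDiv_add_sum_mul_eq QM πM αVB _ hπM (fun m => (hQVB_fin m).ne) hαVB
  simp only [hπ, hinner, ← hQVB_att, true_and]
  rw [klDiv_jointPMF _ _ _ _ hπM]
  refine le_antisymm (le_iInf fun QM => ?_) (iInf_le _ αVB)
  rw [hgibbs, hgibbs, klDiv_self, zero_add]
  exact le_add_self

/-- **Two-step optimisation decomposition and Corollary 1 of the paper (optimal
variational weights `ᾱ^{VB}`), discrete version.** Let `π` be a pmf on `ι × H` with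
positive marginal `πM` and conditionals `cond m`, and for each `m` let `𝒬 m` be a
nonempty set of pmfs on `H`. Then the infimum, over all pmfs `QM` on `ι` and all choices
`QH m ∈ 𝒬 m`, of `KL(QM ⊗ QH‖π)` (where `(QM ⊗ QH) (m, h) = QM m * QH m h`) equals
`⨅ QM, [KL(QM‖πM) + ∑ m, QM m * ⨅ Q ∈ 𝒬 m, KL(Q‖cond m)]`, as an identity in `[0,∞]`.
Moreover, if for each `m` the inner infimum is attained at some `QVB m ∈ 𝒬 m` with
finite value, then the weights
`αVB m ∝ πM m * exp (- KL(QVB m‖cond m))` together with the family `QVB` attain the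
overall infimum. -/
theorem variational_two_step_optimisation {ι H : Type*} [Fintype ι] [Nonempty ι]
    [Countable H]
    (π : PMF (ι × H))
    (πM : PMF ι) (hπM : ∀ m, πM m = ∑' h, π (m, h))
    (hπM_pos : ∀ m, 0 < πM m)
    (cond : ι → PMF H) (hcond : ∀ m h, cond m h = π (m, h) / πM m)
    (𝒬 : ι → Set (PMF H)) (h𝒬 : ∀ m, (𝒬 m).Nonempty)
    (QVB : ι → PMF H) (hQVB_mem : ∀ m, QVB m ∈ 𝒬 m)
    (hQVB_att : ∀ m, klDiv (QVB m) (cond m) = ⨅ Q ∈ 𝒬 m, klDiv Q (cond m))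
    (hQVB_fin : ∀ m, klDiv (QVB m) (cond m) < ⊤)
    (αVB : PMF ι)
    (hαVB : ∀ m, αVB m = ENNReal.ofReal
      ((πM m).toReal * Real.exp (- (klDiv (QVB m) (cond m)).toReal) /
        ∑ j, (πM j).toReal * Real.exp (- (klDiv (QVB j) (cond j)).toReal))) :
    ((⨅ (QM : PMF ι) (QH : (m : ι) → 𝒬 m),
        klDiv (jointPMF QM fun m => (QH m : PMF H)) π) =
      ⨅ QM : PMF ι,
        (klDiv QM πM + ∑ m, QM m * ⨅ Q ∈ 𝒬 m, klDiv Q (cond m))) ∧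
    klDiv (jointPMF αVB QVB) π =
      ⨅ (QM : PMF ι) (QH : (m : ι) → 𝒬 m),
        klDiv (jointPMF QM fun m => (QH m : PMF H)) π :=
  variational_two_step_optimisation_general π πM hπM_pos cond hcond 𝒬 QVB hQVB_mem hQVB_att hQVB_fin
    αVB hαVB
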